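/- arXiv:2208.03409 — 8 statements merged into one kernel-verified Lean document; each statement's English description precedes it below -/
import Mathlib

section
/- Let α > 1 and let P, Q be probability measures on a countable type Z with Q(z) > 0 for all z. Let (κ_z)_{z∈Z} and (η_z)_{z∈Z} be families of probability measures on a measurable space Y with κ_z ≪ η_z for every z. Then the Rényi divergence of order α between the joint measures P⊗κ and Q⊗η (where P⊗κ is the measure on Z×Y given by (P⊗κ)({z}×B) = P(z)·κ_z(B)) satisfies the decomposition identity D_α(P⊗κ ‖ Q⊗η) = (α-1)⁻¹ · log ( Σ_{z∈Z} Q(z) · (P(z)/Q(z))^α · exp((α-1)·D_α(κ_z ‖ η_z)) ). -/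
open MeasureTheory ProbabilityTheory ENNReal

open Classical in
/-- The Rényi divergence of order `α` between two measures: `(α-1)⁻¹ log ∫ (dP/dQ)^α dQ`
when `P ≪ Q`, and `⊤` otherwise. -/
noncomputable def renyiDiv {X : Type*} [MeasurableSpace X] (α : ℝ) (P Q : Measure X) : EReal :=
  if P ≪ Q then ((α - 1)⁻¹ : ℝ) * ENNReal.log (∫⁻ x, (P.rnDeriv Q x) ^ α ∂Q) else ⊤
/-- Decomposition identity for the Rényi divergence of order `α > 1` between joint measures
`P ⊗ κ` and `Q ⊗ η` on `Z × Y`, where `Z` is countable, `Q {z} > 0` for all `z`, and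
`κ z ≪ η z` for all `z`:
`D_α(P⊗κ ‖ Q⊗η) = (α-1)⁻¹ log (Σ_z Q(z) (P(z)/Q(z))^α exp((α-1) D_α(κ_z ‖ η_z)))`. -/
theorem renyiDiv_compProd_countable_eq {Z Y : Type*} [Countable Z] [MeasurableSpace Z]
    [MeasurableSingletonClass Z] [MeasurableSpace Y]
    (α : ℝ) (hα : 1 < α)
    (P Q : Measure Z) [IsProbabilityMeasure P] [IsProbabilityMeasure Q]
    (hQ : ∀ z, 0 < Q {z})
    (κ η : Z → Measure Y) [∀ z, IsProbabilityMeasure (κ z)] [∀ z, IsProbabilityMeasure (η z)]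
    (hac : ∀ z, κ z ≪ η z) :
    renyiDiv α (P ⊗ₘ Kernel.ofFunOfCountable κ) (Q ⊗ₘ Kernel.ofFunOfCountable η) =
      ((α - 1)⁻¹ : ℝ) *
        ENNReal.log (∑' z, Q {z} * (P {z} / Q {z}) ^ α *
          EReal.exp (((α - 1 : ℝ) : EReal) * renyiDiv α (κ z) (η z))) := by
  haveI : IsMarkovKernel (Kernel.ofFunOfCountable κ) :=
    ⟨fun z => show IsProbabilityMeasure (κ z) from inferInstance⟩
  haveI : IsMarkovKernel (Kernel.ofFunOfCountable η) :=
    ⟨fun z => show IsProbabilityMeasure (η z) from inferInstance⟩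
  have hQz_ne : ∀ z, Q {z} ≠ 0 := fun z => (hQ z).ne'
  have hQz_top : ∀ z, Q {z} ≠ ⊤ := fun z => measure_ne_top Q _
  -- density function
  set f : Z × Y → ℝ≥0∞ := fun p => (P {p.1} / Q {p.1}) * (κ p.1).rnDeriv (η p.1) p.2 with hf_def
  have hf_meas : Measurable f := by
    have : Measurable fun p : Y × Z => f p.swap :=
      measurable_from_prod_countable_left fun z =>
        show Measurable fun x : Y => (P {z} / Q {z}) * (κ z).rnDeriv (η z) x from
          measurable_const.mul (Measure.measurable_rnDeriv _ _)
    exact this.comp measurable_swap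
  -- the key withDensity identity
  have h_eq : P ⊗ₘ Kernel.ofFunOfCountable κ =
      (Q ⊗ₘ Kernel.ofFunOfCountable η).withDensity f := by
    ext s hs
    rw [Measure.compProd_apply hs, withDensity_apply _ hs, ← lintegral_indicator hs,
      Measure.lintegral_compProd (hf_meas.indicator hs)]
    rw [lintegral_countable', lintegral_countable']
    refine tsum_congr fun z => ?_
    have hind : ∀ y, s.indicator f (z, y) =
        (Prod.mk z ⁻¹' s).indicator (fun y => f (z, y)) y := by
      intro y
      by_cases hy : (z, y) ∈ s <;> simp [Set.indicator, hy, Set.mem_preimage]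
    simp_rw [hind]
    rw [lintegral_indicator (measurable_prodMk_left hs)]
    have hint : ∫⁻ y in Prod.mk z ⁻¹' s, f (z, y) ∂((Kernel.ofFunOfCountable η) z)
        = (P {z} / Q {z}) * κ z (Prod.mk z ⁻¹' s) := by
      show ∫⁻ y in _, (P {z} / Q {z}) * (κ z).rnDeriv (η z) y ∂(η z) = _
      rw [lintegral_const_mul _ (Measure.measurable_rnDeriv _ _),
        Measure.setLIntegral_rnDeriv (hac z)]
    rw [hint, mul_comm (P {z} / Q {z}) _, mul_assoc,
      ENNReal.div_mul_cancel (hQz_ne z) (hQz_top z)]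
    rfl
  have h_rn : (P ⊗ₘ Kernel.ofFunOfCountable κ).rnDeriv (Q ⊗ₘ Kernel.ofFunOfCountable η)
      =ᵐ[Q ⊗ₘ Kernel.ofFunOfCountable η] f := by
    rw [h_eq]; exact Measure.rnDeriv_withDensity _ hf_meas
  have h_ac : P ⊗ₘ Kernel.ofFunOfCountable κ ≪ Q ⊗ₘ Kernel.ofFunOfCountable η := by
    rw [h_eq]; exact withDensity_absolutelyContinuous _ _
  -- compute the integral
  have h_int : ∫⁻ p, ((P ⊗ₘ Kernel.ofFunOfCountable κ).rnDeriv
        (Q ⊗ₘ Kernel.ofFunOfCountable η) p) ^ α ∂(Q ⊗ₘ Kernel.ofFunOfCountable η)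
      = ∑' z, ((P {z} / Q {z}) ^ α * ∫⁻ y, ((κ z).rnDeriv (η z) y) ^ α ∂(η z)) * Q {z} := by
    rw [lintegral_congr_ae (h_rn.mono fun p hp => by rw [hp])]
    rw [Measure.lintegral_compProd (hf_meas.pow_const α), lintegral_countable']
    refine tsum_congr fun z => ?_
    congr 1
    show ∫⁻ y, ((P {z} / Q {z}) * (κ z).rnDeriv (η z) y) ^ α ∂(η z) = _
    simp_rw [ENNReal.mul_rpow_of_nonneg _ _ (le_of_lt (lt_trans one_pos hα))]
    rw [lintegral_const_mul _ ((Measure.measurable_rnDeriv _ _).pow_const α)]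
  -- per-z exp-of-renyi identity
  have h_exp : ∀ z, EReal.exp (((α - 1 : ℝ) : EReal) * renyiDiv α (κ z) (η z))
      = ∫⁻ y, ((κ z).rnDeriv (η z) y) ^ α ∂(η z) := by
    intro z
    rw [renyiDiv, if_pos (hac z)]
    have hc : (α - 1 : ℝ) ≠ 0 := by linarith
    rw [← mul_assoc, ← EReal.coe_mul, mul_inv_cancel₀ hc]
    simp
  rw [renyiDiv, if_pos h_ac, h_int]
  congr 2
  exact tsum_congr fun z => by rw [h_exp z]; ring
end

section
/- Let α > 1, let P, Q be probability measures on a measurable space X, and let κ, η be Markov kernels from X to a measurable space Y. Then the Rényi divergence of order α between the composed joint measures satisfies D_α(P ⊗ₘ κ ‖ Q ⊗ₘ η) ≥ D_α(P ‖ Q), where P ⊗ₘ κ denotes the measure on X×Y defined by (P ⊗ₘ κ)(A×B) = ∫_A κ(x)(B) dP(x). -/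
/-!
The density of `P` with respect to `Q` is the `η`-average of the joint density:
`dP/dQ (x) = ∫ d(P ⊗ₘ κ)/d(Q ⊗ₘ η) (x, y) dη(x)(y)` for `Q`-a.e. `x`.
Since `t ↦ t ^ α` is convex for `α ≥ 1`, Jensen's inequality in each fibre `η x` bounds
`∫ (dP/dQ)^α dQ` by `∫ (d(P ⊗ₘ κ)/d(Q ⊗ₘ η))^α d(Q ⊗ₘ η)`, and `(α - 1)⁻¹ log` is monotone.
-/

open MeasureTheory ProbabilityTheory ENNReal

theorem rpow_lintegral_le_lintegral_rpow {X : Type*} [MeasurableSpace X] (μ : Measure X)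
    [IsProbabilityMeasure μ] {f : X → ℝ≥0∞} (hf : AEMeasurable f μ) {p : ℝ} (hp : 1 ≤ p) :
    (∫⁻ x, f x ∂μ) ^ p ≤ ∫⁻ x, f x ^ p ∂μ := by
  have h := eLpNorm'_le_eLpNorm'_of_exponent_le one_pos hp μ hf.aestronglyMeasurable
  simp only [eLpNorm', enorm_eq_self, ENNReal.rpow_one, div_one] at h
  simpa [← ENNReal.rpow_mul, (by positivity : p ≠ 0)] using
    ENNReal.rpow_le_rpow h (zero_le_one.trans hp)

namespace MeasureTheory.Measure

variable {X Y : Type*} [MeasurableSpace X] [MeasurableSpace Y] {μ ν : Measure X}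
  [IsFiniteMeasure μ] [IsFiniteMeasure ν] {κ η : Kernel X Y} [IsMarkovKernel κ]

theorem rnDeriv_ae_eq_lintegral_rnDeriv_compProd [IsFiniteKernel η] (h : μ ⊗ₘ κ ≪ ν ⊗ₘ η) :
    μ.rnDeriv ν =ᵐ[ν] fun x ↦ ∫⁻ y, (μ ⊗ₘ κ).rnDeriv (ν ⊗ₘ η) (x, y) ∂η x := by
  refine ae_eq_of_forall_setLIntegral_eq_of_sigmaFinite (measurable_rnDeriv _ _)
    (by fun_prop) fun s hs _ ↦ ?_
  calc ∫⁻ x in s, μ.rnDeriv ν x ∂ν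
      = μ s := setLIntegral_rnDeriv (absolutelyContinuous_of_compProd h) s
    _ = (μ ⊗ₘ κ) (s ×ˢ Set.univ) := by simp [compProd_apply_prod hs .univ]
    _ = ∫⁻ x in s, ∫⁻ y, (μ ⊗ₘ κ).rnDeriv (ν ⊗ₘ η) (x, y) ∂η x ∂ν := by
      rw [← setLIntegral_rnDeriv h, setLIntegral_compProd (by fun_prop) hs .univ]
      simp

theorem lintegral_rnDeriv_rpow_le_compProd [IsMarkovKernel η] (h : μ ⊗ₘ κ ≪ ν ⊗ₘ η) {p : ℝ}
    (hp : 1 ≤ p) :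
    ∫⁻ x, μ.rnDeriv ν x ^ p ∂ν ≤ ∫⁻ z, (μ ⊗ₘ κ).rnDeriv (ν ⊗ₘ η) z ^ p ∂(ν ⊗ₘ η) := by
  calc ∫⁻ x, μ.rnDeriv ν x ^ p ∂ν
      = ∫⁻ x, (∫⁻ y, (μ ⊗ₘ κ).rnDeriv (ν ⊗ₘ η) (x, y) ∂η x) ^ p ∂ν := by
        refine lintegral_congr_ae ?_
        filter_upwards [rnDeriv_ae_eq_lintegral_rnDeriv_compProd h] with x hx
        rw [hx]
    _ ≤ ∫⁻ x, ∫⁻ y, (μ ⊗ₘ κ).rnDeriv (ν ⊗ₘ η) (x, y) ^ p ∂η x ∂ν :=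
        lintegral_mono fun x ↦ rpow_lintegral_le_lintegral_rpow _
          ((measurable_rnDeriv _ _).comp measurable_prodMk_left).aemeasurable hp
    _ = ∫⁻ z, (μ ⊗ₘ κ).rnDeriv (ν ⊗ₘ η) z ^ p ∂(ν ⊗ₘ η) :=
        (lintegral_compProd ((measurable_rnDeriv _ _).pow_const p)).symm

end MeasureTheory.Measure

/-- Rényi divergence between the joint measures `P ⊗ₘ κ` and `Q ⊗ₘ η` is at least the Rényi
divergence between the marginals `P` and `Q`. -/
theorem renyiDiv_compProd_ge {X Y : Type*} [MeasurableSpace X] [MeasurableSpace Y]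
    (α : ℝ) (hα : 1 < α)
    (P Q : Measure X) [IsProbabilityMeasure P] [IsProbabilityMeasure Q]
    (κ η : Kernel X Y) [IsMarkovKernel κ] [IsMarkovKernel η] :
    renyiDiv α P Q ≤ renyiDiv α (P ⊗ₘ κ) (Q ⊗ₘ η) := by
  by_cases h : P ⊗ₘ κ ≪ Q ⊗ₘ η
  · rw [renyiDiv, renyiDiv, if_pos (Measure.absolutelyContinuous_of_compProd h), if_pos h]
    have hcoeff : (0 : EReal) ≤ ((α - 1)⁻¹ : ℝ) := by
      exact_mod_cast inv_nonneg.mpr (sub_nonneg.mpr hα.le)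
    exact mul_le_mul_of_nonneg_left (ENNReal.log_monotone
      (Measure.lintegral_rnDeriv_rpow_le_compProd h hα.le)) hcoeff
  · simp [renyiDiv, h]
end

section
/- Let α > 1, let 𝒟 be a type equipped with a binary adjacency relation Adj, let M_p : 𝒟 → (probability measures on a measurable space R₁) be a mechanism, and let 𝓕 be a map sending each pair (D, r) ∈ 𝒟 × R₁ to a probability measure on a measurable space R₂, measurably in r for each fixed D. Suppose M_p is non-private at order α, i.e. for every ε > 0 there exist adjacent D, D' with D_α(M_p(D) ‖ M_p(D')) > ε. Then the composed mechanism M_r, defined by letting M_r(D) be the measure on R₁×R₂ given by (M_r(D))(A×B) = ∫_A 𝓕(D, r)(B) d(M_p(D))(r), is also non-private at order α: for every ε > 0 there exist adjacent D, D' with D_α(M_r(D) ‖ M_r(D')) > ε. -/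
/-!
Rényi divergence satisfies a data-processing inequality for the first marginal of a
composition-product: `D_α(P ‖ Q) ≤ D_α(P ⊗ₘ κ ‖ Q ⊗ₘ η)`. Integrating the density
`g = d(P ⊗ₘ κ)/d(Q ⊗ₘ η)` along the fibres of `η` gives a version of `dP/dQ`, and Jensen's
inequality for `t ↦ t ^ α` on each fibre (a probability measure `η x`) bounds
`∫ (dP/dQ) ^ α dQ` by `∫ g ^ α d(Q ⊗ₘ η)`. Hence adjacent datasets witnessing that `Mp` is not
private witness the same for the composed mechanism.
-/

open MeasureTheory ProbabilityTheory ENNReal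

namespace MeasureTheory

theorem rpow_lintegral_le_lintegral_rpow {X : Type*} [MeasurableSpace X] (μ : Measure X)
    [IsProbabilityMeasure μ] {g : X → ℝ≥0∞} (hg : AEMeasurable g μ) {p : ℝ} (hp : 1 ≤ p) :
    (∫⁻ x, g x ∂μ) ^ p ≤ ∫⁻ x, g x ^ p ∂μ := by
  have h := eLpNorm'_le_eLpNorm'_of_exponent_le one_pos hp μ hg.aestronglyMeasurable
  simp only [eLpNorm', enorm_eq_self, rpow_one, div_one] at h
  calc (∫⁻ x, g x ∂μ) ^ p ≤ ((∫⁻ x, g x ^ p ∂μ) ^ (1 / p)) ^ p := by gcongr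
    _ = ∫⁻ x, g x ^ p ∂μ := by
      rw [← ENNReal.rpow_mul, one_div_mul_cancel (by positivity), ENNReal.rpow_one]

section CompProd

variable {R₁ R₂ : Type*} [MeasurableSpace R₁] [MeasurableSpace R₂]

theorem Measure.fst_withDensity_compProd (Q : Measure R₁) [SFinite Q] (η : Kernel R₁ R₂)
    [IsSFiniteKernel η] {g : R₁ × R₂ → ℝ≥0∞} (hg : Measurable g) :
    ((Q ⊗ₘ η).withDensity g).fst = Q.withDensity fun x ↦ ∫⁻ y, g (x, y) ∂η x := by
  ext s hs
  rw [Measure.fst_apply hs, withDensity_apply _ (measurable_fst hs), withDensity_apply _ hs,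
    ← Set.prod_univ, Measure.setLIntegral_compProd hg hs .univ]
  simp only [Measure.restrict_univ]

theorem Measure.rnDeriv_ae_eq_lintegral_rnDeriv_compProd_s2 {P Q : Measure R₁} [SFinite P]
    [IsFiniteMeasure Q] {κ η : Kernel R₁ R₂} [IsMarkovKernel κ] [IsFiniteKernel η]
    (h : P ⊗ₘ κ ≪ Q ⊗ₘ η) :
    P.rnDeriv Q =ᵐ[Q] fun x ↦ ∫⁻ y, (P ⊗ₘ κ).rnDeriv (Q ⊗ₘ η) (x, y) ∂η x := by
  have hmeas : Measurable ((P ⊗ₘ κ).rnDeriv (Q ⊗ₘ η)) := Measure.measurable_rnDeriv _ _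
  have hP : P = Q.withDensity fun x ↦ ∫⁻ y, (P ⊗ₘ κ).rnDeriv (Q ⊗ₘ η) (x, y) ∂η x := by
    rw [← Measure.fst_withDensity_compProd Q η hmeas, Measure.withDensity_rnDeriv_eq _ _ h,
      Measure.fst_compProd]
  nth_rw 1 [hP]
  exact Measure.rnDeriv_withDensity Q hmeas.lintegral_kernel_prod_right'

theorem lintegral_rnDeriv_rpow_le_compProd {P Q : Measure R₁} [SFinite P]
    [IsFiniteMeasure Q] {κ η : Kernel R₁ R₂} [IsMarkovKernel κ] [IsMarkovKernel η]
    (h : P ⊗ₘ κ ≪ Q ⊗ₘ η) {p : ℝ} (hp : 1 ≤ p) :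
    ∫⁻ x, P.rnDeriv Q x ^ p ∂Q ≤ ∫⁻ z, (P ⊗ₘ κ).rnDeriv (Q ⊗ₘ η) z ^ p ∂(Q ⊗ₘ η) := by
  set g := (P ⊗ₘ κ).rnDeriv (Q ⊗ₘ η)
  have hg : Measurable g := Measure.measurable_rnDeriv _ _
  calc ∫⁻ x, P.rnDeriv Q x ^ p ∂Q = ∫⁻ x, (∫⁻ y, g (x, y) ∂η x) ^ p ∂Q :=
        lintegral_congr_ae <| (Measure.rnDeriv_ae_eq_lintegral_rnDeriv_compProd_s2 h).fun_comp (· ^ p)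
    _ ≤ ∫⁻ x, ∫⁻ y, g (x, y) ^ p ∂η x ∂Q := lintegral_mono fun x ↦
        rpow_lintegral_le_lintegral_rpow (η x) (hg.comp measurable_prodMk_left).aemeasurable hp
    _ = ∫⁻ z, g z ^ p ∂(Q ⊗ₘ η) := (Measure.lintegral_compProd (hg.pow_const p)).symm

end CompProd

end MeasureTheory

theorem renyiDiv_le_renyiDiv_compProd {R₁ R₂ : Type*} [MeasurableSpace R₁] [MeasurableSpace R₂]
    {α : ℝ} (hα : 1 < α) (P Q : Measure R₁) [SFinite P] [IsFiniteMeasure Q]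
    (κ η : Kernel R₁ R₂) [IsMarkovKernel κ] [IsMarkovKernel η] :
    renyiDiv α P Q ≤ renyiDiv α (P ⊗ₘ κ) (Q ⊗ₘ η) := by
  unfold renyiDiv
  by_cases hac : P ⊗ₘ κ ≪ Q ⊗ₘ η
  · have hc : (0 : EReal) ≤ ((α - 1)⁻¹ : ℝ) :=
      EReal.coe_nonneg.2 (inv_nonneg.2 (sub_nonneg.2 hα.le))
    rw [if_pos (Measure.absolutelyContinuous_of_compProd hac), if_pos hac]
    exact mul_le_mul_of_nonneg_left
      (ENNReal.log_monotone (lintegral_rnDeriv_rpow_le_compProd hac hα.le)) hc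
  · simp [hac]

/-- If a (pre-trained) mechanism `Mp` is non-private at order `α` (for every `ε > 0` there are
adjacent datasets whose outputs have Rényi divergence exceeding `ε`), then the composed mechanism
`D ↦ (Mp D, F(D, Mp D))`, given by the measure `Mp D ⊗ₘ F D` on `R₁ × R₂`, remains non-private
at order `α`. -/
theorem composed_mechanism_non_private {𝒟 R₁ R₂ : Type*} [MeasurableSpace R₁]
    [MeasurableSpace R₂] (Adj : 𝒟 → 𝒟 → Prop)
    (α : ℝ) (hα : 1 < α)
    (Mp : 𝒟 → Measure R₁) (hMp : ∀ D, IsProbabilityMeasure (Mp D))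
    (F : 𝒟 → Kernel R₁ R₂) (hF : ∀ D, IsMarkovKernel (F D))
    (h : ∀ ε : ℝ, 0 < ε → ∃ D D', Adj D D' ∧ (ε : EReal) < renyiDiv α (Mp D) (Mp D')) :
    ∀ ε : ℝ, 0 < ε →
      ∃ D D', Adj D D' ∧ (ε : EReal) < renyiDiv α (Mp D ⊗ₘ F D) (Mp D' ⊗ₘ F D') := by
  intro ε hε
  obtain ⟨D, D', hAdj, hlt⟩ := h ε hε
  exact ⟨D, D', hAdj, hlt.trans_le (renyiDiv_le_renyiDiv_compProd hα _ _ (F D) (F D'))⟩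
end

section
/- Let α > 1, let P, Q be probability measures on a measurable space X, and let κ, η be Markov kernels from X to a measurable space Y. If D_α(P ‖ Q) ≤ ε₁ and D_α(κ(x) ‖ η(x)) ≤ ε₂ for every x ∈ X, then the composed joint measures satisfy D_α(P ⊗ₘ κ ‖ Q ⊗ₘ η) ≤ ε₁ + ε₂, where P ⊗ₘ κ denotes the measure on X×Y defined by (P ⊗ₘ κ)(A×B) = ∫_A κ(x)(B) dP(x). -/
open MeasureTheory ProbabilityTheory ENNReal

/-! Write `g = d(P ⊗ₘ κ)/d(Q ⊗ₘ η)`. For any `G ≤ g` one has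
`∫ G^α d(Q ⊗ₘ η) ≤ ∫ G^(α-1) d(P ⊗ₘ κ)`, and Hölder's inequality, applied first to `κ x` against
`η x` in each fibre and then to `P` against `Q`, bounds the right side by
`(C₁ C₂)^(1/α) (∫ G^α d(Q ⊗ₘ η))^(1-1/α)`, where `C₁ = ∫ (dP/dQ)^α dQ` and `C₂` bounds the fibre
integrals. For the truncations `G = min g n` the left side is finite and can be cancelled, giving
`∫ G^α ≤ C₁ C₂`; monotone convergence passes this to `g`. The argument never needs a jointly
measurable version of the fibre densities `d(κ x)/d(η x)`, so no countability assumption on the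
spaces enters. -/

namespace ENNReal

lemma le_of_le_rpow_mul_rpow_one_sub {J K : ℝ≥0∞} {a : ℝ} (ha : 0 < a) (hJ : J ≠ ⊤)
    (h : J ≤ K ^ a * J ^ (1 - a)) : J ≤ K := by
  rcases eq_or_ne J 0 with rfl | hJ0
  · exact zero_le
  have hJa : J ^ a ≤ K ^ a := by
    have hJ1a₀ : J ^ (1 - a) ≠ 0 := by simp [rpow_eq_zero_iff, hJ0, hJ]
    have hJ1a : J ^ (1 - a) ≠ ⊤ := by simp [rpow_eq_top_iff, hJ0, hJ]
    rwa [← ENNReal.mul_le_mul_iff_left hJ1a₀ hJ1a, ← rpow_add _ _ hJ0 hJ, add_sub_cancel,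
      rpow_one]
  exact (orderIsoRpow a ha).le_iff_le.mp hJa

lemma iSup_min_natCast_rpow (x : ℝ≥0∞) {p : ℝ} (hp : 0 < p) :
    ⨆ n : ℕ, min x n ^ p = x ^ p := by
  have hx : ⨆ n : ℕ, min x n = x := by
    simp only [← inf_iSup_eq, iSup_natCast, inf_top_eq]
  conv_rhs => rw [← hx]
  exact ((orderIsoRpow p hp).map_iSup _).symm

end ENNReal

section

variable {Ω : Type*} [MeasurableSpace Ω] {μ ν : Measure Ω}

lemma lintegral_rpow_le_lintegral_rpow_sub_one [μ.HaveLebesgueDecomposition ν] (hμν : μ ≪ ν)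
    {p : ℝ} (hp : 1 ≤ p) {f : Ω → ℝ≥0∞} (hf : Measurable f) (hf_le : f ≤ μ.rnDeriv ν) :
    ∫⁻ x, f x ^ p ∂ν ≤ ∫⁻ x, f x ^ (p - 1) ∂μ := by
  rw [← lintegral_rnDeriv_mul hμν (hf.pow_const _).aemeasurable]
  refine lintegral_mono fun x ↦ ?_
  calc f x ^ p = f x ^ (1 : ℝ) * f x ^ (p - 1) := by
        rw [← rpow_add_of_nonneg _ _ zero_le_one (sub_nonneg.2 hp), add_sub_cancel]
    _ ≤ μ.rnDeriv ν x * f x ^ (p - 1) := by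
        rw [rpow_one]
        exact mul_le_mul_left (hf_le x) _

lemma lintegral_rpow_one_sub_inv_le [μ.HaveLebesgueDecomposition ν] (hμν : μ ≪ ν)
    {p : ℝ} (hp : 1 ≤ p) {H : Ω → ℝ≥0∞} (hH : AEMeasurable H ν) :
    ∫⁻ x, H x ^ (1 - p⁻¹) ∂μ
      ≤ (∫⁻ x, μ.rnDeriv ν x ^ p ∂ν) ^ p⁻¹ * (∫⁻ x, H x ∂ν) ^ (1 - p⁻¹) := by
  have hp₀ : 0 < p := zero_lt_one.trans_le hp
  rw [← lintegral_rnDeriv_mul hμν (hH.pow_const _)]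
  calc ∫⁻ x, μ.rnDeriv ν x * H x ^ (1 - p⁻¹) ∂ν
      = ∫⁻ x, (μ.rnDeriv ν x ^ p) ^ p⁻¹ * H x ^ (1 - p⁻¹) ∂ν := by
        simp_rw [← rpow_mul, mul_inv_cancel₀ hp₀.ne', rpow_one]
    _ ≤ _ := ENNReal.lintegral_mul_norm_pow_le
        ((Measure.measurable_rnDeriv μ ν).pow_const p).aemeasurable hH
        (inv_nonneg.2 hp₀.le) (sub_nonneg.2 (inv_le_one_of_one_le₀ hp)) (add_sub_cancel _ _)

end

lemma renyiDiv_le_coe_iff {Ω : Type*} [MeasurableSpace Ω] {α ε : ℝ} (hα : 1 < α)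
    {μ ν : Measure Ω} :
    renyiDiv α μ ν ≤ ε ↔
      μ ≪ ν ∧ ∫⁻ x, μ.rnDeriv ν x ^ α ∂ν ≤ ENNReal.ofReal (Real.exp ((α - 1) * ε)) := by
  have hα₁ : (0 : EReal) < (α - 1 : ℝ) := by exact_mod_cast sub_pos.2 hα
  unfold renyiDiv
  split_ifs with hμν
  · rw [← log_le_log_iff, log_ofReal_of_pos (Real.exp_pos _), Real.log_exp, EReal.coe_inv,
      mul_comm, ← div_eq_mul_inv, EReal.div_le_iff_le_mul hα₁ (EReal.coe_ne_top _),
      EReal.coe_mul]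
    simp [hμν]
  · simp [hμν]

section CompProd

variable {X Y : Type*} [MeasurableSpace X] [MeasurableSpace Y]
  {P Q : Measure X} [IsFiniteMeasure P] [IsFiniteMeasure Q]
  {κ η : Kernel X Y} [IsFiniteKernel κ] [IsFiniteKernel η] {α : ℝ}

lemma lintegral_rpow_compProd_le_of_le_rnDeriv (hα : 1 ≤ α) (hPQ : P ≪ Q)
    (hκη : ∀ x, κ x ≪ η x) {C : ℝ≥0∞} (hC : ∀ x, ∫⁻ y, (κ x).rnDeriv (η x) y ^ α ∂η x ≤ C)
    {G : X × Y → ℝ≥0∞} (hG : Measurable G) (hG_le : G ≤ (P ⊗ₘ κ).rnDeriv (Q ⊗ₘ η)) :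
    ∫⁻ z, G z ^ α ∂(Q ⊗ₘ η)
      ≤ ((∫⁻ x, P.rnDeriv Q x ^ α ∂Q) * C) ^ α⁻¹ * (∫⁻ z, G z ^ α ∂(Q ⊗ₘ η)) ^ (1 - α⁻¹) := by
  have hα₀ : 0 < α := zero_lt_one.trans_le hα
  have hGα : Measurable fun z ↦ G z ^ α := hG.pow_const α
  set J : X → ℝ≥0∞ := fun x ↦ ∫⁻ y, G (x, y) ^ α ∂η x
  have hJ : Measurable J := hGα.lintegral_kernel_prod_right
  calc ∫⁻ z, G z ^ α ∂(Q ⊗ₘ η)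
      ≤ ∫⁻ z, G z ^ (α - 1) ∂(P ⊗ₘ κ) :=
        lintegral_rpow_le_lintegral_rpow_sub_one (hPQ.compProd (.of_forall hκη)) hα hG hG_le
    _ = ∫⁻ x, ∫⁻ y, (G (x, y) ^ α) ^ (1 - α⁻¹) ∂κ x ∂P := by
        rw [Measure.lintegral_compProd (hG.pow_const _)]
        simp_rw [← rpow_mul, mul_one_sub, mul_inv_cancel₀ hα₀.ne']
    _ ≤ ∫⁻ x, C ^ α⁻¹ * J x ^ (1 - α⁻¹) ∂P :=
        lintegral_mono fun x ↦ (lintegral_rpow_one_sub_inv_le (hκη x) hα (H := fun y ↦ G (x, y) ^ α)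
          (hGα.comp measurable_prodMk_left).aemeasurable).trans (by gcongr; exact hC x)
    _ = C ^ α⁻¹ * ∫⁻ x, J x ^ (1 - α⁻¹) ∂P := lintegral_const_mul _ (hJ.pow_const _)
    _ ≤ C ^ α⁻¹ * ((∫⁻ x, P.rnDeriv Q x ^ α ∂Q) ^ α⁻¹ * (∫⁻ x, J x ∂Q) ^ (1 - α⁻¹)) := by
        gcongr
        exact lintegral_rpow_one_sub_inv_le hPQ hα hJ.aemeasurable
    _ = _ := by
        rw [Measure.lintegral_compProd hGα, mul_rpow_of_nonneg _ _ (inv_nonneg.2 hα₀.le)]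
        ring

lemma lintegral_rnDeriv_compProd_rpow_le (hα : 1 ≤ α) (hPQ : P ≪ Q)
    (hκη : ∀ x, κ x ≪ η x) {C : ℝ≥0∞} (hC : ∀ x, ∫⁻ y, (κ x).rnDeriv (η x) y ^ α ∂η x ≤ C) :
    ∫⁻ z, (P ⊗ₘ κ).rnDeriv (Q ⊗ₘ η) z ^ α ∂(Q ⊗ₘ η) ≤ (∫⁻ x, P.rnDeriv Q x ^ α ∂Q) * C := by
  have hα₀ : 0 < α := zero_lt_one.trans_le hα
  set g := (P ⊗ₘ κ).rnDeriv (Q ⊗ₘ η)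
  have hg : Measurable g := Measure.measurable_rnDeriv _ _
  have h_trunc (n : ℕ) : ∫⁻ z, min (g z) n ^ α ∂(Q ⊗ₘ η) ≤ (∫⁻ x, P.rnDeriv Q x ^ α ∂Q) * C := by
    refine le_of_le_rpow_mul_rpow_one_sub (inv_pos.2 hα₀) ?_
      (lintegral_rpow_compProd_le_of_le_rnDeriv hα hPQ hκη hC (hg.min measurable_const)
        fun z ↦ min_le_left _ _)
    refine ne_top_of_le_ne_top (lintegral_const_lt_top (μ := Q ⊗ₘ η) ?_).ne
      (lintegral_mono fun z ↦ rpow_le_rpow (min_le_right (g z) (n : ℝ≥0∞)) hα₀.le)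
    exact rpow_ne_top_of_nonneg hα₀.le (natCast_ne_top n)
  calc ∫⁻ z, g z ^ α ∂(Q ⊗ₘ η) = ∫⁻ z, ⨆ n : ℕ, min (g z) n ^ α ∂(Q ⊗ₘ η) := by
        simp_rw [iSup_min_natCast_rpow _ hα₀]
    _ = ⨆ n : ℕ, ∫⁻ z, min (g z) n ^ α ∂(Q ⊗ₘ η) := by
        refine lintegral_iSup (fun n ↦ (hg.min measurable_const).pow_const α) fun m n hmn z ↦ ?_
        dsimp only
        gcongr
    _ ≤ _ := iSup_le h_trunc

end CompProd

/-- Composition upper bound for the Rényi divergence: if `D_α(P ‖ Q) ≤ ε₁` and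
`D_α(κ x ‖ η x) ≤ ε₂` for every `x`, then `D_α(P ⊗ₘ κ ‖ Q ⊗ₘ η) ≤ ε₁ + ε₂`. -/
theorem renyiDiv_compProd_le {X Y : Type*} [MeasurableSpace X] [MeasurableSpace Y]
    (α : ℝ) (hα : 1 < α)
    (P Q : Measure X) [IsProbabilityMeasure P] [IsProbabilityMeasure Q]
    (κ η : Kernel X Y) [IsMarkovKernel κ] [IsMarkovKernel η]
    (ε₁ ε₂ : ℝ)
    (h₁ : renyiDiv α P Q ≤ (ε₁ : EReal))
    (h₂ : ∀ x, renyiDiv α (κ x) (η x) ≤ (ε₂ : EReal)) :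
    renyiDiv α (P ⊗ₘ κ) (Q ⊗ₘ η) ≤ ((ε₁ + ε₂ : ℝ) : EReal) := by
  obtain ⟨hPQ, hP⟩ := (renyiDiv_le_coe_iff hα).1 h₁
  obtain ⟨hκη, hκ⟩ := forall_and.1 fun x ↦ (renyiDiv_le_coe_iff hα).1 (h₂ x)
  refine (renyiDiv_le_coe_iff hα).2 ⟨hPQ.compProd (.of_forall hκη), ?_⟩
  calc _ ≤ (∫⁻ x, P.rnDeriv Q x ^ α ∂Q) * ENNReal.ofReal (Real.exp ((α - 1) * ε₂)) :=
        lintegral_rnDeriv_compProd_rpow_le hα.le hPQ hκη hκ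
    _ ≤ ENNReal.ofReal (Real.exp ((α - 1) * ε₁)) * ENNReal.ofReal (Real.exp ((α - 1) * ε₂)) := by
        gcongr
    _ = ENNReal.ofReal (Real.exp ((α - 1) * (ε₁ + ε₂))) := by
        rw [← ofReal_mul (Real.exp_pos _).le, ← Real.exp_add, mul_add]
end

section
/- Let α > 1 and let k be a positive integer. For each i = 1, …, k let Pᵢ, Qᵢ be probability measures on a measurable space Xᵢ with Pᵢ ≪ Qᵢ. Then the Rényi divergence of order α between the product measures is additive: D_α(P₁ × ⋯ × P_k ‖ Q₁ × ⋯ × Q_k) = Σ_{i=1}^{k} D_α(Pᵢ ‖ Qᵢ). In particular, if Mᵢ is a mechanism satisfying (α, εᵢ)-RDP for each i, the independent composition (M₁, …, M_k) satisfies (α, Σᵢ εᵢ)-RDP. -/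
open MeasureTheory ProbabilityTheory ENNReal

/-!
The density of `Measure.pi P` with respect to `Measure.pi Q` is the product of the densities
`dPᵢ/dQᵢ`; its `α`-th power therefore integrates to the product of the individual integrals,
since the coordinates are independent under `Measure.pi Q`, and `log` turns that product into a
sum. Multiplication by a nonnegative real distributes over sums in `EReal` even when some terms
are `⊤`, which gives additivity. A finite bound on `D_α(Pᵢ ‖ Qᵢ)` forces `Pᵢ ≪ Qᵢ`, so the
composition bound follows from additivity.
-/

theorem EReal.coe_finset_sum {ι : Type*} (s : Finset ι) (f : ι → ℝ) :
    ((∑ i ∈ s, f i : ℝ) : EReal) = ∑ i ∈ s, (f i : EReal) :=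
  map_sum (⟨⟨((↑) : ℝ → EReal), EReal.coe_zero⟩, EReal.coe_add⟩ : ℝ →+ EReal) f s

theorem EReal.coe_mul_finset_sum {ι : Type*} (s : Finset ι) (f : ι → EReal) {c : ℝ}
    (hc : 0 ≤ c) : (c : EReal) * ∑ i ∈ s, f i = ∑ i ∈ s, (c : EReal) * f i :=
  map_sum (⟨⟨((c : EReal) * ·), mul_zero _⟩,
    EReal.left_distrib_of_nonneg_of_ne_top (EReal.coe_nonneg.2 hc) (EReal.coe_ne_top c)⟩ :
      EReal →+ EReal) f s

theorem ENNReal.log_prod {ι : Type*} (s : Finset ι) (f : ι → ℝ≥0∞) :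
    log (∏ i ∈ s, f i) = ∑ i ∈ s, log (f i) := by
  induction s using Finset.cons_induction with
  | empty => simp
  | cons a s ha ih => rw [Finset.prod_cons, Finset.sum_cons, log_mul_add, ih]

theorem Set.indicator_univ_pi_prod {ι : Type*} [Fintype ι] {X : ι → Type*} (s : ∀ i, Set (X i))
    (f : ∀ i, X i → ℝ≥0∞) (x : ∀ i, X i) :
    (Set.univ.pi s).indicator (fun x => ∏ i, f i (x i)) x = ∏ i, (s i).indicator (f i) (x i) := by
  classical
  simp only [Set.indicator_apply, Set.mem_univ_pi, Fintype.prod_ite_zero]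

section Pi

variable {ι : Type*} [Fintype ι] {X : ι → Type*} [∀ i, MeasurableSpace (X i)]

theorem lintegral_fintype_prod_eq_prod (μ : ∀ i, Measure (X i))
    [∀ i, IsProbabilityMeasure (μ i)] {f : ∀ i, X i → ℝ≥0∞} (hf : ∀ i, Measurable (f i)) :
    ∫⁻ x, ∏ i, f i (x i) ∂Measure.pi μ = ∏ i, ∫⁻ x, f i x ∂μ i := by
  rw [lintegral_prod_eq_prod_lintegral_of_indepFun _ _
    (iIndepFun_pi fun i => (hf i).aemeasurable) fun i => (hf i).comp (measurable_pi_apply i)]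
  exact Finset.prod_congr rfl fun i _ => (measurePreserving_eval μ i).lintegral_comp (hf i)

theorem Measure.pi_eq_withDensity_prod_rnDeriv (P Q : ∀ i, Measure (X i))
    [∀ i, SigmaFinite (P i)] [∀ i, IsProbabilityMeasure (Q i)] (hac : ∀ i, P i ≪ Q i) :
    Measure.pi P = (Measure.pi Q).withDensity fun x => ∏ i, (P i).rnDeriv (Q i) (x i) := by
  refine Measure.pi_eq fun s hs => ?_
  rw [withDensity_apply _ (MeasurableSet.univ_pi hs),
    ← lintegral_indicator (MeasurableSet.univ_pi hs)]
  simp_rw [Set.indicator_univ_pi_prod]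
  rw [lintegral_fintype_prod_eq_prod Q fun i => (Measure.measurable_rnDeriv _ _).indicator (hs i)]
  refine Finset.prod_congr rfl fun i _ => ?_
  rw [lintegral_indicator (hs i), Measure.setLIntegral_rnDeriv' (hac i) (hs i)]

theorem Measure.lintegral_rnDeriv_pi_rpow (P Q : ∀ i, Measure (X i))
    [∀ i, SigmaFinite (P i)] [∀ i, IsProbabilityMeasure (Q i)] (hac : ∀ i, P i ≪ Q i)
    {α : ℝ} (hα : 0 ≤ α) :
    ∫⁻ x, (Measure.pi P).rnDeriv (Measure.pi Q) x ^ α ∂Measure.pi Q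
      = ∏ i, ∫⁻ x, (P i).rnDeriv (Q i) x ^ α ∂Q i := by
  have hrn : (Measure.pi P).rnDeriv (Measure.pi Q) =ᵐ[Measure.pi Q]
      fun x => ∏ i, (P i).rnDeriv (Q i) (x i) := by
    rw [Measure.pi_eq_withDensity_prod_rnDeriv P Q hac]
    exact Measure.rnDeriv_withDensity _ (Finset.measurable_prod _ fun i _ =>
      (Measure.measurable_rnDeriv _ _).comp (measurable_pi_apply i))
  calc ∫⁻ x, (Measure.pi P).rnDeriv (Measure.pi Q) x ^ α ∂Measure.pi Q
      = ∫⁻ x, ∏ i, (P i).rnDeriv (Q i) (x i) ^ α ∂Measure.pi Q := by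
        refine lintegral_congr_ae ?_
        filter_upwards [hrn] with x hx
        rw [hx, ENNReal.prod_rpow_of_nonneg hα]
    _ = ∏ i, ∫⁻ x, (P i).rnDeriv (Q i) x ^ α ∂Q i :=
        lintegral_fintype_prod_eq_prod Q fun i => (Measure.measurable_rnDeriv _ _).pow_const α

theorem Measure.pi_absolutelyContinuous_pi (P Q : ∀ i, Measure (X i))
    [∀ i, SigmaFinite (P i)] [∀ i, IsProbabilityMeasure (Q i)] (hac : ∀ i, P i ≪ Q i) :
    Measure.pi P ≪ Measure.pi Q := by
  rw [Measure.pi_eq_withDensity_prod_rnDeriv P Q hac]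
  exact withDensity_absolutelyContinuous _ _

theorem renyiDiv_pi (P Q : ∀ i, Measure (X i))
    [∀ i, SigmaFinite (P i)] [∀ i, IsProbabilityMeasure (Q i)] (hac : ∀ i, P i ≪ Q i)
    {α : ℝ} (hα : 1 ≤ α) :
    renyiDiv α (Measure.pi P) (Measure.pi Q) = ∑ i, renyiDiv α (P i) (Q i) := by
  simp only [renyiDiv, if_pos (Measure.pi_absolutelyContinuous_pi P Q hac), if_pos (hac _),
    Measure.lintegral_rnDeriv_pi_rpow P Q hac (by linarith), ENNReal.log_prod]
  exact EReal.coe_mul_finset_sum _ _ (inv_nonneg.2 (by linarith))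

theorem absolutelyContinuous_of_renyiDiv_ne_top {Y : Type*} [MeasurableSpace Y] {α : ℝ}
    {P Q : Measure Y} (h : renyiDiv α P Q ≠ ⊤) : P ≪ Q :=
  not_not.1 fun hPQ => h (if_neg hPQ)

theorem renyiDiv_pi_le_sum (P Q : ∀ i, Measure (X i))
    [∀ i, SigmaFinite (P i)] [∀ i, IsProbabilityMeasure (Q i)] {α : ℝ} (hα : 1 ≤ α)
    {ε : ι → ℝ} (hε : ∀ i, renyiDiv α (P i) (Q i) ≤ ε i) :
    renyiDiv α (Measure.pi P) (Measure.pi Q) ≤ ((∑ i, ε i : ℝ) : EReal) := by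
  have hac i : P i ≪ Q i :=
    absolutelyContinuous_of_renyiDiv_ne_top ((hε i).trans_lt (EReal.coe_lt_top _)).ne
  rw [renyiDiv_pi P Q hac hα, EReal.coe_finset_sum]
  exact Finset.sum_le_sum fun i _ => hε i

end Pi

theorem renyiDiv_pi_eq_sum_general {k : ℕ} {X : Fin k → Type*}
    [∀ i, MeasurableSpace (X i)]
    (α : ℝ) (hα : 1 < α)
    (P Q : ∀ i, Measure (X i)) [∀ i, IsProbabilityMeasure (P i)]
    [∀ i, IsProbabilityMeasure (Q i)]
    (hac : ∀ i, P i ≪ Q i)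
    {𝒟 : Type*} (Adj : 𝒟 → 𝒟 → Prop)
    (M : ∀ i, 𝒟 → Measure (X i)) (hM : ∀ i D, IsProbabilityMeasure (M i D))
    (ε : Fin k → ℝ)
    (hRDP : ∀ i D D', Adj D D' → renyiDiv α (M i D) (M i D') ≤ ((ε i : ℝ) : EReal)) :
    renyiDiv α (Measure.pi P) (Measure.pi Q) = ∑ i, renyiDiv α (P i) (Q i) ∧
      ∀ D D', Adj D D' →
        renyiDiv α (Measure.pi fun i => M i D) (Measure.pi fun i => M i D')
          ≤ ((∑ i, ε i : ℝ) : EReal) := by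
  refine ⟨renyiDiv_pi P Q hac hα.le, fun D D' hD => ?_⟩
  have : ∀ i, IsProbabilityMeasure (M i D) := (hM · D)
  have : ∀ i, IsProbabilityMeasure (M i D') := (hM · D')
  exact renyiDiv_pi_le_sum _ _ hα.le fun i => hRDP i D D' hD

/-- Additivity of the Rényi divergence of order `α > 1` over products of probability measures:
`D_α(P₁ × ⋯ × P_k ‖ Q₁ × ⋯ × Q_k) = Σᵢ D_α(Pᵢ ‖ Qᵢ)`. In particular, if each mechanism `Mᵢ`
satisfies `(α, εᵢ)`-RDP, the independent composition `(M₁, …, M_k)` satisfies `(α, Σᵢ εᵢ)`-RDP. -/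
theorem renyiDiv_pi_eq_sum {k : ℕ} (hk : 0 < k) {X : Fin k → Type*}
    [∀ i, MeasurableSpace (X i)]
    (α : ℝ) (hα : 1 < α)
    (P Q : ∀ i, Measure (X i)) [∀ i, IsProbabilityMeasure (P i)]
    [∀ i, IsProbabilityMeasure (Q i)]
    (hac : ∀ i, P i ≪ Q i)
    {𝒟 : Type*} (Adj : 𝒟 → 𝒟 → Prop)
    (M : ∀ i, 𝒟 → Measure (X i)) (hM : ∀ i D, IsProbabilityMeasure (M i D))
    (ε : Fin k → ℝ)
    (hRDP : ∀ i D D', Adj D D' → renyiDiv α (M i D) (M i D') ≤ ((ε i : ℝ) : EReal)) :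
    renyiDiv α (Measure.pi P) (Measure.pi Q) = ∑ i, renyiDiv α (P i) (Q i) ∧
      ∀ D D', Adj D D' →
        renyiDiv α (Measure.pi fun i => M i D) (Measure.pi fun i => M i D')
          ≤ ((∑ i, ε i : ℝ) : EReal) :=
  renyiDiv_pi_eq_sum_general α hα P Q hac Adj M hM ε hRDP
end

section
/- Let α > 1, ε ≥ 0, and δ ∈ (0,1). Let P, Q be probability measures on a measurable space R with D_α(P ‖ Q) ≤ ε. Then for every measurable set S ⊆ R: P(S) ≤ exp(ε + log(1/δ)/(α-1))·Q(S) + δ. Consequently, a mechanism satisfying (α, ε)-Rényi differential privacy also satisfies (ε + log(1/δ)/(α-1), δ)-differential privacy. -/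
open MeasureTheory ProbabilityTheory ENNReal

lemma rdp_to_dp_key {R : Type*} [MeasurableSpace R]
    (α ε δ : ℝ) (hα : 1 < α) (hε : 0 ≤ ε) (hδ : δ ∈ Set.Ioo (0 : ℝ) 1)
    (P Q : Measure R) [IsProbabilityMeasure P] [IsProbabilityMeasure Q]
    (h : renyiDiv α P Q ≤ (ε : EReal)) (S : Set R) (hS : MeasurableSet S) :
    P S ≤ ENNReal.ofReal (Real.exp (ε + Real.log (1 / δ) / (α - 1))) * Q S
        + ENNReal.ofReal δ := by
  obtain ⟨hδ0, hδ1⟩ := hδ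
  have hα1 : (0:ℝ) < α - 1 := by linarith
  -- absolute continuity
  by_cases hac : P ≪ Q
  swap
  · rw [renyiDiv, if_neg hac] at h
    exact absurd (top_le_iff.mp h) (EReal.coe_ne_top ε)
  rw [renyiDiv, if_pos hac] at h
  set f : R → ℝ≥0∞ := P.rnDeriv Q with hf
  set I : ℝ≥0∞ := ∫⁻ x, f x ^ α ∂Q with hI
  -- bound on I
  have hL : ENNReal.log I ≤ (((α - 1) * ε : ℝ) : EReal) := by
    generalize hLI : ENNReal.log I = L at h ⊢
    induction L using EReal.rec with
    | bot => exact bot_le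
    | coe l =>
      rw [← EReal.coe_mul, EReal.coe_le_coe_iff] at h
      rw [EReal.coe_le_coe_iff]
      have h3 := mul_le_mul_of_nonneg_left h hα1.le
      rwa [← mul_assoc, mul_inv_cancel₀ hα1.ne', one_mul] at h3
    | top =>
      rw [EReal.coe_mul_top_of_pos (by positivity)] at h
      exact absurd (top_le_iff.mp h) (EReal.coe_ne_top ε)
  have hIle : I ≤ ENNReal.ofReal (Real.exp ((α - 1) * ε)) := by
    calc I = EReal.exp (ENNReal.log I) := (ENNReal.exp_log I).symm
    _ ≤ EReal.exp (((α - 1) * ε : ℝ) : EReal) := EReal.exp_monotone hL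
    _ = ENNReal.ofReal (Real.exp ((α - 1) * ε)) := EReal.exp_coe _
  set ε' : ℝ := ε + Real.log (1 / δ) / (α - 1) with hε'
  set c : ℝ≥0∞ := ENNReal.ofReal (Real.exp ε') with hc
  have hc0 : c ≠ 0 := by simp [hc, Real.exp_pos]
  have hctop : c ≠ ⊤ := ENNReal.ofReal_ne_top
  have hck0 : c ^ (α - 1) ≠ 0 := by
    simp [ENNReal.rpow_eq_zero_iff, hc0, hctop]
  have hcktop : c ^ (α - 1) ≠ ⊤ := by
    simp [ENNReal.rpow_eq_top_iff, hc0, hctop]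
  -- key identity: ofReal (exp ((α-1)ε)) = ofReal δ * c ^ (α-1)
  have hexp : Real.exp ε' ^ (α - 1) = Real.exp ((α - 1) * ε) / δ := by
    rw [← Real.exp_log (x := Real.exp ε' ^ (α - 1)) (by positivity),
      Real.log_rpow (Real.exp_pos _), Real.log_exp, hε']
    have h4 : (α - 1) * (ε + Real.log (1 / δ) / (α - 1)) = (α - 1) * ε + Real.log (1 / δ) := by
      field_simp
    rw [h4, Real.exp_add, Real.log_div one_ne_zero hδ0.ne', Real.log_one, zero_sub,
      Real.exp_neg, Real.exp_log hδ0]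
    rfl
  have hkey : ENNReal.ofReal (Real.exp ((α - 1) * ε)) = ENNReal.ofReal δ * c ^ (α - 1) := by
    rw [hc, ENNReal.ofReal_rpow_of_pos (Real.exp_pos _), hexp, ← ENNReal.ofReal_mul hδ0.le,
      mul_div_cancel₀ _ hδ0.ne']
  have hfmeas : Measurable f := Measure.measurable_rnDeriv P Q
  set A : Set R := {x | c < f x} with hA
  have hAmeas : MeasurableSet A := measurableSet_lt measurable_const hfmeas
  -- tail bound
  have htail : (∫⁻ x in A, f x ∂Q) ≤ ENNReal.ofReal δ := by
    have hmul : (∫⁻ x in A, f x ∂Q) * c ^ (α - 1) ≤ I := by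
      rw [← lintegral_mul_const _ hfmeas]
      calc (∫⁻ x in A, f x * c ^ (α - 1) ∂Q) ≤ ∫⁻ x in A, f x ^ α ∂Q := by
            refine setLIntegral_mono_ae' hAmeas ?_
            filter_upwards [Measure.rnDeriv_lt_top P Q] with x hfin hxA
            have hcpos : 0 < c := pos_iff_ne_zero.mpr hc0
            have hx0 : f x ≠ 0 := (hcpos.trans hxA).ne'
            calc f x * c ^ (α - 1) ≤ f x * f x ^ (α - 1) :=
                  mul_le_mul_right (ENNReal.rpow_le_rpow hxA.le hα1.le) _
            _ = f x ^ (1 + (α - 1)) := by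
                  rw [ENNReal.rpow_add 1 (α-1) hx0 hfin.ne, ENNReal.rpow_one]
            _ = f x ^ α := by ring_nf
      _ ≤ I := setLIntegral_le_lintegral A _
    have := hmul.trans (hIle.trans_eq hkey)
    exact (ENNReal.mul_le_mul_iff_left hck0 hcktop).mp this
  -- main computation
  have hPS : P S = ∫⁻ x in S, f x ∂Q := (Measure.setLIntegral_rnDeriv hac S).symm
  rw [hPS]
  calc (∫⁻ x in S, f x ∂Q) = ∫⁻ x in (S \ A) ∪ (S ∩ A), f x ∂Q := by
        rw [Set.diff_union_inter]
  _ ≤ (∫⁻ x in S \ A, f x ∂Q) + ∫⁻ x in S ∩ A, f x ∂Q := lintegral_union_le _ _ _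
  _ ≤ c * Q S + ENNReal.ofReal δ := by
      gcongr
      · calc (∫⁻ x in S \ A, f x ∂Q) ≤ ∫⁻ _ in S \ A, c ∂Q := by
              refine setLIntegral_mono' (hS.diff hAmeas) fun x hx => ?_
              exact not_lt.mp fun hlt => hx.2 hlt
        _ = c * Q (S \ A) := setLIntegral_const _ _
        _ ≤ c * Q S := by gcongr; exact Set.diff_subset
      · calc (∫⁻ x in S ∩ A, f x ∂Q) ≤ ∫⁻ x in A, f x ∂Q :=
              lintegral_mono_set Set.inter_subset_right
        _ ≤ ENNReal.ofReal δ := htail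

/-- RDP-to-DP conversion: if `D_α(P ‖ Q) ≤ ε` with `α > 1` and `δ ∈ (0,1)`, then for every
measurable `S`, `P S ≤ exp(ε + log(1/δ)/(α-1)) · Q S + δ`. Consequently, a mechanism satisfying
`(α, ε)`-RDP also satisfies `(ε + log(1/δ)/(α-1), δ)`-DP. -/
theorem rdp_to_dp {R : Type*} [MeasurableSpace R]
    (α ε δ : ℝ) (hα : 1 < α) (hε : 0 ≤ ε) (hδ : δ ∈ Set.Ioo (0 : ℝ) 1)
    (P Q : Measure R) [IsProbabilityMeasure P] [IsProbabilityMeasure Q]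
    (h : renyiDiv α P Q ≤ (ε : EReal))
    {𝒟 : Type*} (Adj : 𝒟 → 𝒟 → Prop) (M : 𝒟 → Measure R)
    (hM : ∀ D, IsProbabilityMeasure (M D))
    (hRDP : ∀ D D', Adj D D' → renyiDiv α (M D) (M D') ≤ (ε : EReal)) :
    (∀ S : Set R, MeasurableSet S →
      P S ≤ ENNReal.ofReal (Real.exp (ε + Real.log (1 / δ) / (α - 1))) * Q S
        + ENNReal.ofReal δ) ∧
      ∀ D D', Adj D D' → ∀ S : Set R, MeasurableSet S →
        (M D) S ≤ ENNReal.ofReal (Real.exp (ε + Real.log (1 / δ) / (α - 1))) * (M D') S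
          + ENNReal.ofReal δ := by
  constructor
  · exact fun S hS => rdp_to_dp_key α ε δ hα hε hδ P Q h S hS
  · intro D D' hadj S hS
    haveI := hM D; haveI := hM D'
    exact rdp_to_dp_key α ε δ hα hε hδ (M D) (M D') (hRDP D D' hadj) S hS
end

section
/- Let α > 1, σ > 0, let p be a positive integer, and let μ₁, μ₂ ∈ ℝ^p. The Rényi divergence of order α between the multivariate Gaussian measures N(μ₁, σ²·I_p) and N(μ₂, σ²·I_p) (with identity covariance scaled by σ²) equals α·‖μ₁ - μ₂‖₂²/(2σ²). Consequently, for any function f : 𝒟 → ℝ^p with ℓ₂-sensitivity Δ₂f = max over adjacent D, D' of ‖f(D) - f(D')‖₂, the Gaussian mechanism M_σ(D) = N(f(D), σ²·I_p) satisfies (α, α·(Δ₂f)²/(2σ²))-Rényi differential privacy. -/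
/-!
The likelihood ratio `g₁ / g₂` of two one-dimensional Gaussians of equal variance `v` satisfies
`g₂ (g₁ / g₂) ^ α = exp (α (α - 1) (m₁ - m₂)² / (2v)) · g`, where, by completing the square, `g`
is the Gaussian density centred at `α m₁ + (1 - α) m₂`; so the `α`-th moment of the ratio under
`N(m₂, v)` is that exponential. For product measures the likelihood ratio is the product of the
coordinate ratios, and the coordinates are independent, so the moments multiply and the exponents
add up to `α (α - 1) ‖μ₁ - μ₂‖² / (2v)`.
-/

open MeasureTheory ProbabilityTheory ENNReal

/-- The Gaussian measure `N(μ, v·I_p)` on `ℝ^p` with mean `μ` and covariance `v` times the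
identity, realized as a product of one-dimensional Gaussians. -/
noncomputable def gaussianPi {p : ℕ} (μ : Fin p → ℝ) (v : NNReal) : Measure (Fin p → ℝ) :=
  Measure.pi fun i => gaussianReal (μ i) v

lemma renyiDiv_withDensity {X : Type*} [MeasurableSpace X] (α : ℝ) (Q : Measure X)
    [SigmaFinite Q] {r : X → ℝ≥0∞} (hr : Measurable r) :
    renyiDiv α (Q.withDensity r) Q = ((α - 1)⁻¹ : ℝ) * ENNReal.log (∫⁻ x, r x ^ α ∂Q) := by
  rw [renyiDiv, if_pos (withDensity_absolutelyContinuous Q r),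
    lintegral_congr_ae ((Measure.rnDeriv_withDensity Q hr).mono fun x hx => by rw [hx])]

section Pi

variable {ι : Type*} [Fintype ι] {Ω : ι → Type*} [∀ i, MeasurableSpace (Ω i)]
  {ν : (i : ι) → Measure (Ω i)} [∀ i, IsProbabilityMeasure (ν i)]

lemma lintegral_pi_prod_eq_prod_lintegral {h : (i : ι) → Ω i → ℝ≥0∞}
    (hh : ∀ i, Measurable (h i)) :
    ∫⁻ x, ∏ i, h i (x i) ∂Measure.pi ν = ∏ i, ∫⁻ t, h i t ∂ν i := by
  have hindep : iIndepFun (fun i (x : (j : ι) → Ω j) => h i (x i)) (Measure.pi ν) :=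
    iIndepFun_pi fun i => (hh i).aemeasurable
  refine (lintegral_prod_eq_prod_lintegral_of_indepFun Finset.univ _ hindep
    fun i => (hh i).comp (measurable_pi_apply i)).trans ?_
  exact Finset.prod_congr rfl fun i _ => (measurePreserving_eval ν i).lintegral_comp (hh i)

lemma pi_eq_withDensity_prod {μ : (i : ι) → Measure (Ω i)} [∀ i, SigmaFinite (μ i)]
    {r : (i : ι) → Ω i → ℝ≥0∞} (hr : ∀ i, Measurable (r i))
    (hμ : ∀ i, μ i = (ν i).withDensity (r i)) :
    Measure.pi μ = (Measure.pi ν).withDensity fun x => ∏ i, r i (x i) := by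
  refine Measure.pi_eq fun s hs => ?_
  have hbox : (Set.univ.pi s).indicator (fun x => ∏ i, r i (x i))
      = fun x => ∏ i, (s i).indicator (r i) (x i) := by
    ext x
    classical
    simp only [Set.indicator_apply, Set.mem_univ_pi, Finset.prod_ite_zero, Finset.mem_univ,
      forall_const]
  rw [withDensity_apply _ (.univ_pi hs), ← lintegral_indicator (.univ_pi hs), hbox,
    lintegral_pi_prod_eq_prod_lintegral fun i => (hr i).indicator (hs i)]
  exact Finset.prod_congr rfl fun i _ => by
    rw [hμ i, withDensity_apply _ (hs i), lintegral_indicator (hs i)]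

end Pi

section Gaussian

variable {v : NNReal}

noncomputable def gaussianLikelihoodRatio (m₁ m₂ : ℝ) (v : NNReal) (t : ℝ) : ℝ≥0∞ :=
  ENNReal.ofReal (gaussianPDFReal m₁ v t / gaussianPDFReal m₂ v t)

@[fun_prop]
lemma measurable_gaussianLikelihoodRatio (m₁ m₂ : ℝ) :
    Measurable (gaussianLikelihoodRatio m₁ m₂ v) :=
  ((measurable_gaussianPDFReal _ _).div (measurable_gaussianPDFReal _ _)).ennreal_ofReal

lemma gaussianReal_eq_withDensity_likelihoodRatio (m₁ m₂ : ℝ) (hv : v ≠ 0) :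
    gaussianReal m₁ v = (gaussianReal m₂ v).withDensity (gaussianLikelihoodRatio m₁ m₂ v) := by
  rw [gaussianReal_of_var_ne_zero _ hv, gaussianReal_of_var_ne_zero _ hv,
    ← withDensity_mul _ (measurable_gaussianPDF _ _) (measurable_gaussianLikelihoodRatio m₁ m₂)]
  congr with t
  simp only [Pi.mul_apply, gaussianPDF, gaussianLikelihoodRatio]
  rw [← ENNReal.ofReal_mul (gaussianPDFReal_nonneg _ _ _),
    mul_div_cancel₀ _ (gaussianPDFReal_pos _ _ _ hv).ne']

lemma gaussianPDFReal_mul_div_rpow (α : ℝ) (hv : v ≠ 0) (m₁ m₂ t : ℝ) :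
    gaussianPDFReal m₂ v t * (gaussianPDFReal m₁ v t / gaussianPDFReal m₂ v t) ^ α
      = Real.exp (α * (α - 1) * (m₁ - m₂) ^ 2 / (2 * v)) *
        gaussianPDFReal (α * m₁ + (1 - α) * m₂) v t := by
  have hv' : (0 : ℝ) < v := NNReal.coe_pos.mpr (pos_iff_ne_zero.mpr hv)
  have hnorm : 0 < Real.sqrt (2 * Real.pi * v) := by positivity
  simp only [gaussianPDFReal]
  rw [mul_div_mul_left _ _ (inv_ne_zero hnorm.ne'), ← Real.exp_sub,
    Real.rpow_def_of_pos (Real.exp_pos _), Real.log_exp, mul_assoc, ← Real.exp_add,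
    mul_left_comm, ← Real.exp_add]
  congr 2
  field_simp
  ring

lemma lintegral_gaussianLikelihoodRatio_rpow (α : ℝ) (hv : v ≠ 0) (m₁ m₂ : ℝ) :
    ∫⁻ t, gaussianLikelihoodRatio m₁ m₂ v t ^ α ∂gaussianReal m₂ v
      = ENNReal.ofReal (Real.exp (α * (α - 1) * (m₁ - m₂) ^ 2 / (2 * v))) := by
  have hintegrand : ∀ t, gaussianPDF m₂ v t * gaussianLikelihoodRatio m₁ m₂ v t ^ α
      = ENNReal.ofReal (Real.exp (α * (α - 1) * (m₁ - m₂) ^ 2 / (2 * v)))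
        * gaussianPDF (α * m₁ + (1 - α) * m₂) v t := by
    intro t
    rw [gaussianPDF, gaussianPDF, gaussianLikelihoodRatio,
      ENNReal.ofReal_rpow_of_pos (div_pos (gaussianPDFReal_pos _ _ _ hv)
        (gaussianPDFReal_pos _ _ _ hv)),
      ← ENNReal.ofReal_mul (gaussianPDFReal_nonneg _ _ _), gaussianPDFReal_mul_div_rpow α hv,
      ENNReal.ofReal_mul (Real.exp_nonneg _)]
  rw [gaussianReal_of_var_ne_zero _ hv, lintegral_withDensity_eq_lintegral_mul _
      (measurable_gaussianPDF _ _) ((measurable_gaussianLikelihoodRatio m₁ m₂).pow_const α)]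
  simp only [Pi.mul_apply, hintegrand]
  rw [lintegral_const_mul _ (measurable_gaussianPDF _ _), lintegral_gaussianPDF_eq_one _ hv,
    mul_one]

variable {p : ℕ}

instance (μ : Fin p → ℝ) : IsProbabilityMeasure (gaussianPi μ v) := by
  unfold gaussianPi
  infer_instance

lemma gaussianPi_eq_withDensity_likelihoodRatio (μ₁ μ₂ : Fin p → ℝ) (hv : v ≠ 0) :
    gaussianPi μ₁ v = (gaussianPi μ₂ v).withDensity
      fun x => ∏ i, gaussianLikelihoodRatio (μ₁ i) (μ₂ i) v (x i) :=
  pi_eq_withDensity_prod (fun _ => measurable_gaussianLikelihoodRatio _ _)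
    fun _ => gaussianReal_eq_withDensity_likelihoodRatio _ _ hv

lemma lintegral_prod_gaussianLikelihoodRatio_rpow {α : ℝ} (hα : 0 ≤ α) (hv : v ≠ 0)
    (μ₁ μ₂ : Fin p → ℝ) :
    ∫⁻ x, (∏ i, gaussianLikelihoodRatio (μ₁ i) (μ₂ i) v (x i)) ^ α ∂gaussianPi μ₂ v
      = ENNReal.ofReal (Real.exp (α * (α - 1) * (∑ i, (μ₁ i - μ₂ i) ^ 2) / (2 * v))) := by
  simp_rw [← ENNReal.prod_rpow_of_nonneg hα]
  rw [gaussianPi, lintegral_pi_prod_eq_prod_lintegral fun i =>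
      (measurable_gaussianLikelihoodRatio _ _).pow_const α]
  simp_rw [lintegral_gaussianLikelihoodRatio_rpow α hv]
  rw [← ENNReal.ofReal_prod_of_nonneg fun i _ => (Real.exp_pos _).le, ← Real.exp_sum,
    Finset.mul_sum, Finset.sum_div]

lemma renyiDiv_gaussianPi_eq {α : ℝ} (hα₀ : 0 ≤ α) (hα₁ : α ≠ 1) (hv : v ≠ 0)
    (μ₁ μ₂ : Fin p → ℝ) :
    renyiDiv α (gaussianPi μ₁ v) (gaussianPi μ₂ v)
      = ((α * (∑ i, (μ₁ i - μ₂ i) ^ 2) / (2 * v) : ℝ) : EReal) := by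
  rw [gaussianPi_eq_withDensity_likelihoodRatio μ₁ μ₂ hv, renyiDiv_withDensity _ _ (by fun_prop),
    lintegral_prod_gaussianLikelihoodRatio_rpow hα₀ hv,
    ENNReal.log_ofReal_of_pos (Real.exp_pos _), Real.log_exp, ← EReal.coe_mul]
  congr 1
  field_simp [sub_ne_zero.mpr hα₁]

end Gaussian

theorem renyiDiv_gaussianPi_general (α σ : ℝ) (hα : 1 < α) (hσ : 0 < σ)
    {p : ℕ} (μ₁ μ₂ : Fin p → ℝ)
    {𝒟 : Type*} (Adj : 𝒟 → 𝒟 → Prop) (f : 𝒟 → Fin p → ℝ) (Δ : ℝ)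
    (hΔ : ∀ D D', Adj D D' → Real.sqrt (∑ i, (f D i - f D' i) ^ 2) ≤ Δ) :
    renyiDiv α (gaussianPi μ₁ ⟨σ ^ 2, sq_nonneg σ⟩) (gaussianPi μ₂ ⟨σ ^ 2, sq_nonneg σ⟩)
      = ((α * (∑ i, (μ₁ i - μ₂ i) ^ 2) / (2 * σ ^ 2) : ℝ) : EReal) ∧
      ∀ D D', Adj D D' →
        renyiDiv α (gaussianPi (f D) ⟨σ ^ 2, sq_nonneg σ⟩)
            (gaussianPi (f D') ⟨σ ^ 2, sq_nonneg σ⟩)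
          ≤ ((α * Δ ^ 2 / (2 * σ ^ 2) : ℝ) : EReal) := by
  have hα₀ : 0 ≤ α := by linarith
  have hv : (⟨σ ^ 2, sq_nonneg σ⟩ : NNReal) ≠ 0 := NNReal.coe_ne_zero.mp (pow_ne_zero 2 hσ.ne')
  refine ⟨renyiDiv_gaussianPi_eq hα₀ hα.ne' hv μ₁ μ₂, fun D D' hadj => ?_⟩
  rw [renyiDiv_gaussianPi_eq hα₀ hα.ne' hv, EReal.coe_le_coe_iff]
  have hsq : ∑ i, (f D i - f D' i) ^ 2 ≤ Δ ^ 2 := (Real.sqrt_le_iff.mp (hΔ D D' hadj)).2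
  exact div_le_div_of_nonneg_right (mul_le_mul_of_nonneg_left hsq hα₀)
    (by positivity : (0 : ℝ) ≤ 2 * σ ^ 2)

/-- The Rényi divergence of order `α > 1` between the multivariate Gaussian measures
`N(μ₁, σ²·I_p)` and `N(μ₂, σ²·I_p)` equals `α ‖μ₁ - μ₂‖₂² / (2σ²)`. Consequently, the Gaussian
mechanism `M_σ(D) = N(f(D), σ²·I_p)` applied to a function `f` of ℓ₂-sensitivity at most `Δ`
satisfies `(α, α Δ² / (2σ²))`-Rényi differential privacy. -/
theorem renyiDiv_gaussianPi (α σ : ℝ) (hα : 1 < α) (hσ : 0 < σ)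
    {p : ℕ} (hp : 0 < p) (μ₁ μ₂ : Fin p → ℝ)
    {𝒟 : Type*} (Adj : 𝒟 → 𝒟 → Prop) (f : 𝒟 → Fin p → ℝ) (Δ : ℝ)
    (hΔ : ∀ D D', Adj D D' → Real.sqrt (∑ i, (f D i - f D' i) ^ 2) ≤ Δ) :
    renyiDiv α (gaussianPi μ₁ ⟨σ ^ 2, sq_nonneg σ⟩) (gaussianPi μ₂ ⟨σ ^ 2, sq_nonneg σ⟩)
      = ((α * (∑ i, (μ₁ i - μ₂ i) ^ 2) / (2 * σ ^ 2) : ℝ) : EReal) ∧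
      ∀ D D', Adj D D' →
        renyiDiv α (gaussianPi (f D) ⟨σ ^ 2, sq_nonneg σ⟩)
            (gaussianPi (f D') ⟨σ ^ 2, sq_nonneg σ⟩)
          ≤ ((α * Δ ^ 2 / (2 * σ ^ 2) : ℝ) : EReal) :=
  renyiDiv_gaussianPi_general α σ hα hσ μ₁ μ₂ Adj f Δ hΔ
end

section
/- Let α > 1, σ > 0, C > 0, let p, T be positive integers, and let ḡ₁, …, ḡ_T : 𝒟 → ℝ^p be functions each satisfying ‖ḡ_t(D)‖₂ ≤ C for every D ∈ 𝒟 and every t. Then the composed mechanism releasing the T independently perturbed gradients, M(D) = N(ḡ₁(D), σ²C²·I_p) × ⋯ × N(ḡ_T(D), σ²C²·I_p) on (ℝ^p)^T, satisfies (α, 2αT/σ²)-Rényi differential privacy: for all D, D' ∈ 𝒟, D_α(M(D) ‖ M(D')) ≤ 2αT/σ². -/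
open MeasureTheory ProbabilityTheory ENNReal

/-!
Write `dP/dQ` as a density `ρ`. The moment `∫ ρ ^ α dQ` is multiplicative over product measures,
because the density of a product measure is the product of the densities. For one-dimensional
Gaussians of common variance `v`, completing the square gives
`(φ_μ / φ_ν) ^ α φ_ν = exp (α (α - 1) (μ - ν)² / 2v) φ_{α μ + (1 - α) ν}`, so the moment is
`exp (α (α - 1) (μ - ν)² / 2v)`. Hence `D_α(M(D) ‖ M(D'))` equals
`α / (2 σ² C²) · ∑ₜ ‖ḡₜ(D) - ḡₜ(D')‖²`, and each summand is at most `4 C²`.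
-/

open scoped NNReal

/-- `m = ∫⁻ (dP/dQ) ^ α ∂Q`, with `dP/dQ` represented by a measurable density instead of
`Measure.rnDeriv`. -/
def HasRenyiMoment {X : Type*} [MeasurableSpace X] (α : ℝ) (P Q : Measure X) (m : ℝ≥0∞) :
    Prop :=
  ∃ ρ : X → ℝ≥0∞, Measurable ρ ∧ Q.withDensity ρ = P ∧ ∫⁻ x, ρ x ^ α ∂Q = m

theorem HasRenyiMoment.renyiDiv_eq {X : Type*} [MeasurableSpace X] {α : ℝ} {P Q : Measure X}
    [SigmaFinite Q] {m : ℝ≥0∞} (h : HasRenyiMoment α P Q m) :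
    renyiDiv α P Q = ((α - 1)⁻¹ : ℝ) * ENNReal.log m := by
  obtain ⟨ρ, hρ, rfl, rfl⟩ := h
  have hrn : (Q.withDensity ρ).rnDeriv Q =ᵐ[Q] ρ := Measure.rnDeriv_withDensity Q hρ
  rw [renyiDiv, if_pos (withDensity_absolutelyContinuous Q ρ),
    lintegral_congr_ae (hrn.mono fun x hx => by rw [hx])]

section Pi

variable {ι : Type*} [Fintype ι] {X : ι → Type*} [∀ i, MeasurableSpace (X i)]

theorem lintegral_pi_prod_eq_prod_lintegral_s10 (μ : ∀ i, Measure (X i))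
    [∀ i, IsProbabilityMeasure (μ i)] {f : ∀ i, X i → ℝ≥0∞} (hf : ∀ i, Measurable (f i)) :
    ∫⁻ x, ∏ i, f i (x i) ∂Measure.pi μ = ∏ i, ∫⁻ y, f i y ∂μ i := by
  rw [lintegral_prod_eq_prod_lintegral_of_indepFun _ _ (iIndepFun_pi fun i => (hf i).aemeasurable)
    fun i => (hf i).comp (measurable_pi_apply i)]
  exact Finset.prod_congr rfl fun i _ => (measurePreserving_eval μ i).lintegral_comp (hf i)

theorem Measure.pi_withDensity_prod {μ ν : ∀ i, Measure (X i)}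
    [∀ i, IsProbabilityMeasure (μ i)] [∀ i, SigmaFinite (ν i)] {ρ : ∀ i, X i → ℝ≥0∞}
    (hρ : ∀ i, Measurable (ρ i)) (h : ∀ i, (μ i).withDensity (ρ i) = ν i) :
    (Measure.pi μ).withDensity (fun x => ∏ i, ρ i (x i)) = Measure.pi ν := by
  refine (Measure.pi_eq fun s hs => ?_).symm
  have hpi : Set.univ.pi s = ⋂ i ∈ Finset.univ, Function.eval i ⁻¹' s i := by
    simp [Set.pi_def]
  have hS : MeasurableSet (Set.univ.pi s) := MeasurableSet.univ_pi hs
  rw [withDensity_apply _ hS, ← lintegral_indicator hS]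
  have hind : ∀ x, (Set.univ.pi s).indicator (fun x => ∏ i, ρ i (x i)) x
      = ∏ i, (s i).indicator (ρ i) (x i) := fun x => by
    rw [hpi, ← Finset.prod_fn, ← prod_indicator_apply]
    rfl
  simp_rw [hind]
  rw [lintegral_pi_prod_eq_prod_lintegral_s10 μ fun i => (hρ i).indicator (hs i)]
  refine Finset.prod_congr rfl fun i _ => ?_
  rw [lintegral_indicator (hs i), ← withDensity_apply _ (hs i), h i]

theorem HasRenyiMoment.pi {α : ℝ} (hα : 0 ≤ α) {P Q : ∀ i, Measure (X i)}
    [∀ i, SigmaFinite (P i)] [∀ i, IsProbabilityMeasure (Q i)] {m : ι → ℝ≥0∞}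
    (h : ∀ i, HasRenyiMoment α (P i) (Q i) (m i)) :
    HasRenyiMoment α (Measure.pi P) (Measure.pi Q) (∏ i, m i) := by
  choose ρ hρ hQP hm using h
  refine ⟨fun x => ∏ i, ρ i (x i),
    Finset.measurable_prod _ fun i _ => (hρ i).comp (measurable_pi_apply i),
    Measure.pi_withDensity_prod hρ hQP, ?_⟩
  simp_rw [← ENNReal.prod_rpow_of_nonneg hα]
  rw [lintegral_pi_prod_eq_prod_lintegral_s10 Q fun i => (hρ i).pow_const α]
  exact Finset.prod_congr rfl fun i _ => hm i

end Pi

theorem ENNReal.prod_ofReal_exp {ι : Type*} (s : Finset ι) (c : ι → ℝ) :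
    ∏ i ∈ s, ENNReal.ofReal (Real.exp (c i)) = ENNReal.ofReal (Real.exp (∑ i ∈ s, c i)) := by
  rw [Real.exp_sum, ENNReal.ofReal_prod_of_nonneg fun i _ => (Real.exp_pos (c i)).le]

section Gaussian

variable {v : ℝ≥0}

theorem gaussianPDFReal_div_rpow_mul (hv : v ≠ 0) (α μ ν x : ℝ) :
    (gaussianPDFReal μ v x / gaussianPDFReal ν v x) ^ α * gaussianPDFReal ν v x
      = Real.exp (α * (α - 1) * (μ - ν) ^ 2 / (2 * v))
        * gaussianPDFReal (α * μ + (1 - α) * ν) v x := by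
  have hv' : (0 : ℝ) < v := by positivity
  simp only [gaussianPDFReal]
  -- completing the square in the exponent
  rw [mul_div_mul_left _ _ (by positivity), ← Real.exp_sub, ← Real.exp_mul, mul_left_comm,
    ← Real.exp_add, mul_left_comm, ← Real.exp_add]
  congr 2
  field_simp
  ring

theorem hasRenyiMoment_gaussianReal (hv : v ≠ 0) (α μ ν : ℝ) :
    HasRenyiMoment α (gaussianReal μ v) (gaussianReal ν v)
      (ENNReal.ofReal (Real.exp (α * (α - 1) * (μ - ν) ^ 2 / (2 * v)))) := by
  have hratio : Measurable fun x => gaussianPDF μ v x / gaussianPDF ν v x :=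
    (measurable_gaussianPDF μ v).div (measurable_gaussianPDF ν v)
  refine ⟨_, hratio, ?_, ?_⟩
  · rw [gaussianReal_of_var_ne_zero _ hv, gaussianReal_of_var_ne_zero _ hv,
      ← withDensity_mul _ (measurable_gaussianPDF ν v) hratio]
    congr 1 with x
    exact ENNReal.mul_div_cancel (gaussianPDF_pos _ hv _).ne' ENNReal.ofReal_ne_top
  · have hdensity : ∀ x, gaussianPDF ν v x * (gaussianPDF μ v x / gaussianPDF ν v x) ^ α
        = ENNReal.ofReal (Real.exp (α * (α - 1) * (μ - ν) ^ 2 / (2 * v)))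
          * gaussianPDF (α * μ + (1 - α) * ν) v x := fun x => by
      have hν := gaussianPDFReal_pos ν v x hv
      have hμ := gaussianPDFReal_pos μ v x hv
      simp only [gaussianPDF]
      rw [← ENNReal.ofReal_div_of_pos hν, ENNReal.ofReal_rpow_of_pos (by positivity),
        ← ENNReal.ofReal_mul hν.le, ← ENNReal.ofReal_mul (Real.exp_pos _).le, mul_comm,
        gaussianPDFReal_div_rpow_mul hv]
    rw [gaussianReal_of_var_ne_zero _ hv,
      lintegral_withDensity_eq_lintegral_mul _ (measurable_gaussianPDF ν v) (hratio.pow_const α)]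
    simp only [Pi.mul_apply, hdensity]
    rw [lintegral_const_mul _ (measurable_gaussianPDF _ _), lintegral_gaussianPDF_eq_one _ hv,
      mul_one]

instance {p : ℕ} (μ : Fin p → ℝ) : IsProbabilityMeasure (gaussianPi μ v) := by
  unfold gaussianPi
  infer_instance

theorem hasRenyiMoment_gaussianPi {p : ℕ} (hv : v ≠ 0) {α : ℝ} (hα : 0 ≤ α)
    (μ ν : Fin p → ℝ) :
    HasRenyiMoment α (gaussianPi μ v) (gaussianPi ν v)
      (ENNReal.ofReal (Real.exp (α * (α - 1) / (2 * v) * ∑ i, (μ i - ν i) ^ 2))) := by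
  have h := HasRenyiMoment.pi hα fun i => hasRenyiMoment_gaussianReal hv α (μ i) (ν i)
  rwa [ENNReal.prod_ofReal_exp, ← Finset.sum_div, ← Finset.mul_sum, mul_div_right_comm] at h

end Gaussian

theorem sum_sub_sq_le_four_mul_sq {ι : Type*} {s : Finset ι} {a b : ι → ℝ} {C : ℝ}
    (ha : Real.sqrt (∑ i ∈ s, a i ^ 2) ≤ C) (hb : Real.sqrt (∑ i ∈ s, b i ^ 2) ≤ C) :
    ∑ i ∈ s, (a i - b i) ^ 2 ≤ 4 * C ^ 2 := by
  obtain ⟨-, ha⟩ := Real.sqrt_le_iff.mp ha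
  obtain ⟨-, hb⟩ := Real.sqrt_le_iff.mp hb
  calc ∑ i ∈ s, (a i - b i) ^ 2 ≤ ∑ i ∈ s, (2 * a i ^ 2 + 2 * b i ^ 2) :=
        Finset.sum_le_sum fun i _ => by nlinarith [sq_nonneg (a i + b i)]
    _ = 2 * ∑ i ∈ s, a i ^ 2 + 2 * ∑ i ∈ s, b i ^ 2 := by
        rw [Finset.sum_add_distrib, Finset.mul_sum, Finset.mul_sum]
    _ ≤ 4 * C ^ 2 := by linarith

theorem gaussian_mechanism_composition_rdp_general (α σ C : ℝ) (hα : 1 < α) (hσ : 0 < σ) (hC : 0 < C)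
    {p T : ℕ} {𝒟 : Type*} (g : Fin T → 𝒟 → Fin p → ℝ)
    (hg : ∀ t D, Real.sqrt (∑ i, g t D i ^ 2) ≤ C) :
    ∀ D D' : 𝒟,
      renyiDiv α
          (Measure.pi fun t => gaussianPi (g t D) ⟨(σ * C) ^ 2, sq_nonneg (σ * C)⟩)
          (Measure.pi fun t => gaussianPi (g t D') ⟨(σ * C) ^ 2, sq_nonneg (σ * C)⟩)
        ≤ ((2 * α * T / σ ^ 2 : ℝ) : EReal) := by
  intro D D'
  set v : ℝ≥0 := ⟨(σ * C) ^ 2, sq_nonneg (σ * C)⟩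
  have hv : (v : ℝ) = (σ * C) ^ 2 := rfl
  have hv0 : v ≠ 0 := by rw [← NNReal.coe_ne_zero, hv]; positivity
  have hα0 : 0 ≤ α := by linarith
  have h := HasRenyiMoment.pi hα0 fun t => hasRenyiMoment_gaussianPi hv0 hα0 (g t D) (g t D')
  rw [ENNReal.prod_ofReal_exp, ← Finset.mul_sum] at h
  rw [h.renyiDiv_eq, ENNReal.log_ofReal_of_pos (Real.exp_pos _), Real.log_exp, ← EReal.coe_mul,
    EReal.coe_le_coe_iff]
  have hsum : ∑ t, ∑ i, (g t D i - g t D' i) ^ 2 ≤ T * (4 * C ^ 2) := by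
    simpa using Finset.sum_le_sum (s := Finset.univ) fun t _ =>
      sum_sub_sq_le_four_mul_sq (hg t D) (hg t D')
  have hα1 : α - 1 ≠ 0 := by linarith
  calc (α - 1)⁻¹ * (α * (α - 1) / (2 * v) * ∑ t, ∑ i, (g t D i - g t D' i) ^ 2)
      = α / (2 * (σ * C) ^ 2) * ∑ t, ∑ i, (g t D i - g t D' i) ^ 2 := by
        rw [hv]; field_simp
    _ ≤ α / (2 * (σ * C) ^ 2) * (T * (4 * C ^ 2)) := by gcongr
    _ = 2 * α * T / σ ^ 2 := by field_simp; ring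

/-- If each clipped averaged gradient `ḡ_t : 𝒟 → ℝ^p` satisfies `‖ḡ_t(D)‖₂ ≤ C`, then the
composition of `T` independently perturbed Gaussian mechanisms
`M(D) = N(ḡ₁(D), σ²C²·I_p) × ⋯ × N(ḡ_T(D), σ²C²·I_p)` satisfies `(α, 2αT/σ²)`-RDP:
for all `D, D'`, `D_α(M(D) ‖ M(D')) ≤ 2αT/σ²`. -/
theorem gaussian_mechanism_composition_rdp (α σ C : ℝ) (hα : 1 < α) (hσ : 0 < σ) (hC : 0 < C)
    {p T : ℕ} (hp : 0 < p) (hT : 0 < T) {𝒟 : Type*} (g : Fin T → 𝒟 → Fin p → ℝ)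
    (hg : ∀ t D, Real.sqrt (∑ i, g t D i ^ 2) ≤ C) :
    ∀ D D' : 𝒟,
      renyiDiv α
          (Measure.pi fun t => gaussianPi (g t D) ⟨(σ * C) ^ 2, sq_nonneg (σ * C)⟩)
          (Measure.pi fun t => gaussianPi (g t D') ⟨(σ * C) ^ 2, sq_nonneg (σ * C)⟩)
        ≤ ((2 * α * T / σ ^ 2 : ℝ) : EReal) :=
  gaussian_mechanism_composition_rdp_general α σ C hα hσ hC g hg
end
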